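/- arXiv:0805.3438 — 4 statements merged into one kernel-verified Lean document; each statement's English description precedes it below -/
import Mathlib

section
/- The graded derivation d_Q defined by d_Q h_{μν} = −(i/2)(d_μ u_ν + d_ν u_μ − η_{μν}d_ρ u^ρ), d_Q u_μ = 0, d_Q ũ_μ = i d^ν h_{μν}, extended to all jet variables by [d_Q, d_λ] = 0, satisfies d_Q² = 0. -/
/-! The ghost `u` is `d_Q`-closed and `d_Q` commutes with the derivatives, so `d_Q² h = 0` and
`d_Q² u = 0` at once. For the antighost, `d_Q² ũ_μ` is a multiple of the divergence
`d^ν (d_Q h_{μν})`; the two trace terms `d_μ (d_ρ u^ρ)` cancel and what is left is `□ u_μ`,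
which vanishes on-shell. -/

section Minkowski

variable {A : Type*} [AddCommGroup A] [Module ℂ A] {η : Fin 4 → Fin 4 → ℂ}

theorem sum_minkowski_smul_smul
    (hη : ∀ μ ν, η μ ν = if μ = ν then (if μ = 0 then 1 else -1) else 0)
    (x : Fin 4 → A) (μ : Fin 4) :
    ∑ ν, η ν ν • η μ ν • x ν = x μ := by
  rw [Finset.sum_eq_single μ]
  · rw [smul_smul, hη]
    by_cases hμ : μ = 0 <;> simp [hμ]
  · intro ν _ hν
    rw [hη μ ν, if_neg (Ne.symm hν), zero_smul, smul_zero]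
  · simp

theorem sum_minkowski_smul_map_gauge_variation
    (hη : ∀ μ ν, η μ ν = if μ = ν then (if μ = 0 then 1 else -1) else 0)
    (d : Fin 4 → A →ₗ[ℂ] A) (hcomm : ∀ μ ν a, d μ (d ν a) = d ν (d μ a))
    (u : Fin 4 → A) (μ : Fin 4) :
    ∑ ν, η ν ν • d ν (d μ (u ν) + d ν (u μ) - η μ ν • ∑ ρ, η ρ ρ • d ρ (u ρ)) =
      ∑ ν, η ν ν • d ν (d ν (u μ)) := by
  set divU := ∑ ρ, η ρ ρ • d ρ (u ρ)
  have hdiv : ∑ ν, η ν ν • d ν (d μ (u ν)) = d μ divU := by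
    simp only [divU, map_sum, map_smul, hcomm μ]
  have htrace : ∑ ν, η ν ν • d ν (η μ ν • divU) = d μ divU := by
    simp only [map_smul]
    exact sum_minkowski_smul_smul hη (fun ν => d ν divU) μ
  simp only [map_add, map_sub, smul_add, smul_sub, Finset.sum_add_distrib,
    Finset.sum_sub_distrib, hdiv, htrace]
  abel

end Minkowski

open Complex in
theorem stmt10_general {A : Type*} [AddCommGroup A] [Module ℂ A]
    (η : Fin 4 → Fin 4 → ℂ)
    (hη : ∀ μ ν, η μ ν = if μ = ν then (if μ = 0 then 1 else -1) else 0)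
    (d : Fin 4 → A →ₗ[ℂ] A) (dQ : A →ₗ[ℂ] A)
    (hcomm : ∀ μ ν a, d μ (d ν a) = d ν (d μ a))
    (hQd : ∀ μ a, dQ (d μ a) = d μ (dQ a))
    (h : Fin 4 → Fin 4 → A) (u ut : Fin 4 → A)
    -- the fields are massless: they satisfy the wave equation □ = η^{λκ} d_λ d_κ = 0
    (hwaveu : ∀ μ, (∑ lam : Fin 4, η lam lam • d lam (d lam (u μ))) = 0)
    (hQh : ∀ μ ν, dQ (h μ ν) =
      (-(I/2)) • (d μ (u ν) + d ν (u μ) - η μ ν • (∑ ρ : Fin 4, η ρ ρ • d ρ (u ρ))))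
    (hQu : ∀ μ, dQ (u μ) = 0)
    (hQut : ∀ μ, dQ (ut μ) = I • (∑ ν : Fin 4, η ν ν • d ν (h μ ν))) :
    (∀ μ ν, dQ (dQ (h μ ν)) = 0) ∧
    (∀ μ, dQ (dQ (u μ)) = 0) ∧
    (∀ μ, dQ (dQ (ut μ)) = 0) := by
  refine ⟨fun μ ν => by simp [hQh, hQd, hQu], fun μ => by simp [hQu], fun μ => ?_⟩
  simp only [hQut, map_smul, map_sum, hQd, hQh, smul_comm _ (-(I / 2)), ← Finset.smul_sum,
    sum_minkowski_smul_map_gauge_variation hη d hcomm, hwaveu, smul_zero]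

open Complex in
/-- The massless gauge variation `d_Q`, defined on the generators by
`d_Q h_{μν} = −(i/2)(d_μ u_ν + d_ν u_μ − η_{μν} d_ρ u^ρ)`, `d_Q u_μ = 0`,
`d_Q ũ_μ = i d^ν h_{μν}`, and extended by `[d_Q, d_λ] = 0`, squares to zero
(on-shell, i.e. on the jet variables of the massless fields). -/
theorem stmt10 {A : Type*} [AddCommGroup A] [Module ℂ A]
    (η : Fin 4 → Fin 4 → ℂ)
    (hη : ∀ μ ν, η μ ν = if μ = ν then (if μ = 0 then 1 else -1) else 0)
    (d : Fin 4 → A →ₗ[ℂ] A) (dQ : A →ₗ[ℂ] A)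
    (hcomm : ∀ μ ν a, d μ (d ν a) = d ν (d μ a))
    (hQd : ∀ μ a, dQ (d μ a) = d μ (dQ a))
    (h : Fin 4 → Fin 4 → A) (u ut : Fin 4 → A)
    (hsymh : ∀ μ ν, h μ ν = h ν μ)
    -- the fields are massless: they satisfy the wave equation □ = η^{λκ} d_λ d_κ = 0
    (hwaveh : ∀ μ ν, (∑ lam : Fin 4, η lam lam • d lam (d lam (h μ ν))) = 0)
    (hwaveu : ∀ μ, (∑ lam : Fin 4, η lam lam • d lam (d lam (u μ))) = 0)
    (hwaveut : ∀ μ, (∑ lam : Fin 4, η lam lam • d lam (d lam (ut μ))) = 0)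
    (hQh : ∀ μ ν, dQ (h μ ν) =
      (-(I/2)) • (d μ (u ν) + d ν (u μ) - η μ ν • (∑ ρ : Fin 4, η ρ ρ • d ρ (u ρ))))
    (hQu : ∀ μ, dQ (u μ) = 0)
    (hQut : ∀ μ, dQ (ut μ) = I • (∑ ν : Fin 4, η ν ν • d ν (h μ ν))) :
    (∀ μ ν, dQ (dQ (h μ ν)) = 0) ∧
    (∀ μ, dQ (dQ (u μ)) = 0) ∧
    (∀ μ, dQ (dQ (ut μ)) = 0) :=
  stmt10_general η hη d dQ hcomm hQd h u ut hwaveu hQh hQu hQut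
end

section
/- In the massive case, the graded derivation d_Q defined by d_Q h_{μν} = −(i/2)(d_μ u_ν + d_ν u_μ − η_{μν}d_ρ u^ρ), d_Q u_μ = 0, d_Q ũ_μ = i(d^ν h_{μν} + m v_μ), d_Q v_μ = −(im/2) u_μ, with [d_Q, d_λ] = 0, satisfies d_Q² = 0. -/
/-!
`d_Q` commutes with the `d_λ`, so `d_Q² h`, `d_Q² u` and `d_Q² v` are built from `d_Q u = 0`. The only
nontrivial case is `d_Q² ũ_μ = i(d^ν d_Q h_{μν} + m d_Q v_μ)`: the divergence of the symmetrised gradient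
of `u` with its trace removed is `□ u_μ` (the two `d_μ (d·u)` terms cancel since `η` is diagonal with
`η_{μμ}² = 1`), so `d_Q² ũ_μ = ½ (□ + m²) u_μ`, which vanishes on shell.
-/

open Finset

section Contraction

variable {ι R A : Type*} [Fintype ι] [CommRing R] [AddCommGroup A] [Module R A]
  {η : ι → ι → R} (d : ι → A →ₗ[R] A)

theorem sum_smul_map_smul_of_diagonal (hdiag : ∀ μ ν, μ ≠ ν → η μ ν = 0)
    (hsq : ∀ μ, η μ μ * η μ μ = 1) (μ : ι) (a : A) :
    ∑ ν, η ν ν • d ν (η μ ν • a) = d μ a := by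
  rw [Fintype.sum_eq_single μ fun ν hνμ => by
      rw [hdiag μ ν hνμ.symm, zero_smul, map_zero, smul_zero],
    map_smul, smul_smul, hsq, one_smul]

theorem sum_smul_map_map_comm (hcomm : ∀ μ ν a, d μ (d ν a) = d ν (d μ a))
    (c : ι → R) (u : ι → A) (μ : ι) :
    ∑ ν, c ν • d ν (d μ (u ν)) = d μ (∑ ν, c ν • d ν (u ν)) := by
  simp only [map_sum, map_smul, hcomm μ]

theorem sum_smul_map_gaugeVariation_eq (hdiag : ∀ μ ν, μ ≠ ν → η μ ν = 0)
    (hsq : ∀ μ, η μ μ * η μ μ = 1) (hcomm : ∀ μ ν a, d μ (d ν a) = d ν (d μ a))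
    (u : ι → A) (μ : ι) :
    ∑ ν, η ν ν • d ν (d μ (u ν) + d ν (u μ) - η μ ν • ∑ ρ, η ρ ρ • d ρ (u ρ)) =
      ∑ ν, η ν ν • d ν (d ν (u μ)) := by
  simp only [map_add, map_sub, smul_add, smul_sub, sum_add_distrib, sum_sub_distrib,
    sum_smul_map_map_comm d hcomm, sum_smul_map_smul_of_diagonal d hdiag hsq]
  abel

end Contraction

section Minkowski

variable {η : Fin 4 → Fin 4 → ℂ}

theorem minkowski_offDiag_eq_zero
    (hη : ∀ μ ν, η μ ν = if μ = ν then (if μ = 0 then 1 else -1) else 0) (μ ν : Fin 4)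
    (hμν : μ ≠ ν) : η μ ν = 0 := by
  rw [hη, if_neg hμν]

theorem minkowski_diag_mul_self
    (hη : ∀ μ ν, η μ ν = if μ = ν then (if μ = 0 then 1 else -1) else 0) (μ : Fin 4) :
    η μ μ * η μ μ = 1 := by
  rw [hη, if_pos rfl]
  split_ifs <;> norm_num

end Minkowski

open Complex in
theorem stmt11_general {A : Type*} [AddCommGroup A] [Module ℂ A]
    (η : Fin 4 → Fin 4 → ℂ)
    (hη : ∀ μ ν, η μ ν = if μ = ν then (if μ = 0 then 1 else -1) else 0)
    (m : ℝ)
    (d : Fin 4 → A →ₗ[ℂ] A) (dQ : A →ₗ[ℂ] A)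
    (hcomm : ∀ μ ν a, d μ (d ν a) = d ν (d μ a))
    (hQd : ∀ μ a, dQ (d μ a) = d μ (dQ a))
    (h : Fin 4 → Fin 4 → A) (v u ut : Fin 4 → A)
    -- the fields have mass m: Klein-Gordon equation (□ + m²) = 0
    (hKGu : ∀ μ, (∑ lam : Fin 4, η lam lam • d lam (d lam (u μ)))
      + ((m : ℂ)^2) • u μ = 0)
    (hQh : ∀ μ ν, dQ (h μ ν) =
      (-(I/2)) • (d μ (u ν) + d ν (u μ) - η μ ν • (∑ ρ : Fin 4, η ρ ρ • d ρ (u ρ))))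
    (hQu : ∀ μ, dQ (u μ) = 0)
    (hQut : ∀ μ, dQ (ut μ) =
      I • ((∑ ν : Fin 4, η ν ν • d ν (h μ ν)) + (m : ℂ) • v μ))
    (hQv : ∀ μ, dQ (v μ) = (-(I * (m : ℂ) / 2)) • u μ) :
    (∀ μ ν, dQ (dQ (h μ ν)) = 0) ∧
    (∀ μ, dQ (dQ (u μ)) = 0) ∧
    (∀ μ, dQ (dQ (ut μ)) = 0) ∧
    (∀ μ, dQ (dQ (v μ)) = 0) := by
  have hdiag := minkowski_offDiag_eq_zero hη
  have hsq := minkowski_diag_mul_self hη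
  refine ⟨fun μ ν => ?_, fun μ => by rw [hQu, map_zero], fun μ => ?_,
    fun μ => by rw [hQv, map_smul, hQu, smul_zero]⟩
  · simp only [hQh, map_smul, map_sub, map_add, map_sum, hQd, hQu, map_zero, smul_zero,
      sum_const_zero, add_zero, sub_zero]
  · have hdivh : ∑ ν, η ν ν • d ν (dQ (h μ ν)) = (-(I / 2)) • ∑ ν, η ν ν • d ν (d ν (u μ)) := by
      simp only [hQh, map_smul, smul_comm (η _ _) (-(I / 2)), ← smul_sum,
        sum_smul_map_gaugeVariation_eq d hdiag hsq hcomm]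
    simp only [hQut, map_smul, map_add, map_sum, hQd]
    rw [hdivh, hQv]
    linear_combination (norm := match_scalars <;> ring_nf <;> simp only [I_sq] <;> ring)
      ((1 : ℂ) / 2) • hKGu μ

open Complex in
/-- In the massive case, the gauge variation `d_Q` defined by
`d_Q h_{μν} = −(i/2)(d_μ u_ν + d_ν u_μ − η_{μν} d_ρ u^ρ)`, `d_Q u_μ = 0`,
`d_Q ũ_μ = i(d^ν h_{μν} + m v_μ)`, `d_Q v_μ = −(im/2) u_μ`, with `[d_Q, d_λ] = 0`,
squares to zero (on-shell, i.e. on the jet variables of the mass-`m` fields). -/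
theorem stmt11 {A : Type*} [AddCommGroup A] [Module ℂ A]
    (η : Fin 4 → Fin 4 → ℂ)
    (hη : ∀ μ ν, η μ ν = if μ = ν then (if μ = 0 then 1 else -1) else 0)
    (m : ℝ)
    (d : Fin 4 → A →ₗ[ℂ] A) (dQ : A →ₗ[ℂ] A)
    (hcomm : ∀ μ ν a, d μ (d ν a) = d ν (d μ a))
    (hQd : ∀ μ a, dQ (d μ a) = d μ (dQ a))
    (h : Fin 4 → Fin 4 → A) (v u ut : Fin 4 → A)
    (hsymh : ∀ μ ν, h μ ν = h ν μ)
    -- the fields have mass m: Klein-Gordon equation (□ + m²) = 0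
    (hKGh : ∀ μ ν, (∑ lam : Fin 4, η lam lam • d lam (d lam (h μ ν)))
      + ((m : ℂ)^2) • h μ ν = 0)
    (hKGv : ∀ μ, (∑ lam : Fin 4, η lam lam • d lam (d lam (v μ)))
      + ((m : ℂ)^2) • v μ = 0)
    (hKGu : ∀ μ, (∑ lam : Fin 4, η lam lam • d lam (d lam (u μ)))
      + ((m : ℂ)^2) • u μ = 0)
    (hKGut : ∀ μ, (∑ lam : Fin 4, η lam lam • d lam (d lam (ut μ)))
      + ((m : ℂ)^2) • ut μ = 0)
    (hQh : ∀ μ ν, dQ (h μ ν) =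
      (-(I/2)) • (d μ (u ν) + d ν (u μ) - η μ ν • (∑ ρ : Fin 4, η ρ ρ • d ρ (u ρ))))
    (hQu : ∀ μ, dQ (u μ) = 0)
    (hQut : ∀ μ, dQ (ut μ) =
      I • ((∑ ν : Fin 4, η ν ν • d ν (h μ ν)) + (m : ℂ) • v μ))
    (hQv : ∀ μ, dQ (v μ) = (-(I * (m : ℂ) / 2)) • u μ) :
    (∀ μ ν, dQ (dQ (h μ ν)) = 0) ∧
    (∀ μ, dQ (dQ (u μ)) = 0) ∧
    (∀ μ, dQ (dQ (ut μ)) = 0) ∧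
    (∀ μ, dQ (dQ (v μ)) = 0) :=
  stmt11_general η hη m d dQ hcomm hQd h v u ut hKGu hQh hQu hQut hQv
end

section
/- Let W^{[μν];ρ;{σ₁σ₂σ₃}} be a tensor antisymmetric in μ,ν and totally symmetric in σ₁,σ₂,σ₃, satisfying S_{ρ,σ₁,σ₂,σ₃} W^{[μν];ρ;{σ₁σ₂σ₃}} = 0 (total symmetrization over the last four indices vanishes). Define W̃^{[μν];[ρσ₁];{σ₂σ₃}} = (3/4)W^{[μν];ρ;{σ₁σ₂σ₃}} − (ρ ↔ σ₁). Then W^{[μν];ρ;{σ₁σ₂σ₃}} = S_{σ₁σ₂σ₃} W̃^{[μν];[ρσ₁];{σ₂σ₃}}, where S denotes symmetrization (averaged) over the indicated indices. -/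
/-!
Since `W x` is symmetric in its last `n + 1` slots, a sum over all permutations of a tuple only
depends on which entry is sent to the distinguished slot `0` (decompose the permutation with
`Equiv.Perm.decomposeFin`). Writing `B = ∑ⱼ W (s j) (s with ρ in slot j)`, the vanishing of the
total symmetrization on `(ρ, s)` becomes `W ρ s + B = 0`, while the symmetrization of the
`(ρ σ₁)`-antisymmetrized tensor with weight `c` equals `c (W ρ s - B / (n + 1))`. For
`c = (n + 1) / (n + 2)` (that is `3 / 4` for three symmetric slots) this is `W ρ s`.
-/

open Equiv Finset Nat

theorem Fin.cons_comp_swap_zero_succ_comp_succ {α : Type*} {n : ℕ} (ρ : α) (s : Fin (n + 1) → α)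
    (j : Fin (n + 1)) :
    (Fin.cons ρ s : Fin (n + 2) → α) ∘ swap 0 j.succ ∘ Fin.succ = Function.update s j ρ := by
  funext i
  by_cases hij : i = j
  · subst hij; simp
  · have : swap 0 j.succ i.succ = i.succ :=
      swap_apply_of_ne_of_ne (Fin.succ_ne_zero i) (Fin.succ_injective _ |>.ne hij)
    simp [this, hij]

theorem Fin.cons_comp_swap_zero_comp_succ {α : Type*} {n : ℕ} (ρ : α) (s : Fin (n + 1) → α)
    (a : Fin (n + 1)) :
    (Fin.cons ρ (s ∘ swap 0 a ∘ Fin.succ) : Fin (n + 1) → α) = Function.update s a ρ ∘ swap 0 a := by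
  funext i
  cases i using Fin.cases with
  | zero => simp
  | succ i =>
    have : swap 0 a i.succ ≠ a := by
      intro h
      exact Fin.succ_ne_zero i (by simpa using congrArg (swap 0 a) h)
    simp [Function.update_of_ne this]

theorem Fin.cons_comp_perm {α : Type*} {n : ℕ} (ρ : α) (v : Fin n → α) (τ : Perm (Fin n)) :
    (Fin.cons ρ (v ∘ τ) : Fin (n + 1) → α) = Fin.cons ρ v ∘ Perm.decomposeFin.symm (0, τ) := by
  funext i
  cases i using Fin.cases with
  | zero => simp
  | succ i => simp [Perm.decomposeFin_symm_apply_succ]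

section

variable {α : Type*} {n : ℕ}

theorem sum_perm_fin_succ_of_perm_invariant {M : Type*} [AddCommMonoid M]
    (f : α → (Fin n → α) → M) (hf : ∀ a v (τ : Perm (Fin n)), f a (v ∘ τ) = f a v)
    (t : Fin (n + 1) → α) :
    ∑ σ : Perm (Fin (n + 1)), f (t (σ 0)) (t ∘ σ ∘ Fin.succ)
      = n ! • ∑ a, f (t a) (t ∘ swap 0 a ∘ Fin.succ) := by
  rw [← (Perm.decomposeFin (n := n)).symm.sum_comp, Fintype.sum_prod_type]
  have hcomp : ∀ a (τ : Perm (Fin n)),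
      t ∘ Perm.decomposeFin.symm (a, τ) ∘ Fin.succ = (t ∘ swap 0 a ∘ Fin.succ) ∘ τ := by
    intro a τ
    funext i
    simp [Perm.decomposeFin_symm_apply_succ]
  simp only [Perm.decomposeFin_symm_apply_zero, hcomp, hf, sum_const, Finset.card_univ,
    Fintype.card_perm, Fintype.card_fin, smul_sum]

theorem sum_perm_cons_eq_of_perm_invariant {M : Type*} [AddCommMonoid M]
    (W : α → (Fin (n + 1) → α) → M) (hW : ∀ x s (τ : Perm (Fin (n + 1))), W x (s ∘ τ) = W x s)
    (ρ : α) (s : Fin (n + 1) → α) :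
    ∑ σ : Perm (Fin (n + 2)),
        W ((Fin.cons ρ s : Fin (n + 2) → α) (σ 0)) (Fin.cons ρ s ∘ σ ∘ Fin.succ)
      = (n + 1)! • (W ρ s + ∑ j, W (s j) (Function.update s j ρ)) := by
  rw [sum_perm_fin_succ_of_perm_invariant W hW, Fin.sum_univ_succ]
  simp only [swap_self, coe_refl, Function.id_comp, Fin.cons_zero, Fin.cons_succ,
    Fin.cons_comp_succ, Fin.cons_comp_swap_zero_succ_comp_succ]

theorem sum_perm_exchange_eq_of_perm_invariant {M : Type*} [AddCommMonoid M]
    (W : α → (Fin (n + 1) → α) → M) (hW : ∀ x s (τ : Perm (Fin (n + 1))), W x (s ∘ τ) = W x s)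
    (ρ : α) (s : Fin (n + 1) → α) :
    ∑ σ : Perm (Fin (n + 1)), W (s (σ 0)) (Fin.cons ρ (s ∘ σ ∘ Fin.succ))
      = n ! • ∑ j, W (s j) (Function.update s j ρ) := by
  rw [sum_perm_fin_succ_of_perm_invariant (fun x v => W x (Fin.cons ρ v))
    (fun x v τ => by rw [Fin.cons_comp_perm, hW])]
  simp only [Fin.cons_comp_swap_zero_comp_succ, hW]

theorem eq_symmetrize_antisymmetrize_of_symmetrize_eq_zero {K : Type*} [Field K] [CharZero K]
    (W : α → (Fin (n + 1) → α) → K) (hW : ∀ x s (τ : Perm (Fin (n + 1))), W x (s ∘ τ) = W x s)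
    (hsum : ∀ t : Fin (n + 2) → α, ∑ σ : Perm (Fin (n + 2)), W (t (σ 0)) (t ∘ σ ∘ Fin.succ) = 0)
    (ρ : α) (s : Fin (n + 1) → α) :
    W ρ s = ((n + 1)! : K)⁻¹ * ∑ σ : Perm (Fin (n + 1)),
      (((n + 1) / (n + 2) : K) * W ρ (s ∘ σ)
        - ((n + 1) / (n + 2) : K) * W (s (σ 0)) (Fin.cons ρ (s ∘ σ ∘ Fin.succ))) := by
  have hcyclic : W ρ s + ∑ j, W (s j) (Function.update s j ρ) = 0 := by
    have h := hsum (Fin.cons ρ s)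
    rw [sum_perm_cons_eq_of_perm_invariant W hW, smul_eq_zero] at h
    exact h.resolve_left (factorial_ne_zero _)
  rw [sum_sub_distrib, ← mul_sum, ← mul_sum, sum_perm_exchange_eq_of_perm_invariant W hW]
  simp only [hW, sum_const, Finset.card_univ, Fintype.card_perm, Fintype.card_fin, nsmul_eq_mul,
    factorial_succ, cast_mul, cast_add, cast_one]
  have hn : (n ! : K) ≠ 0 := cast_ne_zero.mpr (factorial_ne_zero n)
  have hn2 : (n + 2 : K) ≠ 0 := by norm_cast
  field_simp
  linear_combination hcyclic

end

theorem stmt14_general {K : Type*} [Field K] [CharZero K]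
    (W : Fin 4 → Fin 4 → Fin 4 → (Fin 3 → Fin 4) → K)
    (hsym : ∀ μ ν ρ (s : Fin 3 → Fin 4) (σ : Equiv.Perm (Fin 3)),
      W μ ν ρ (s ∘ σ) = W μ ν ρ s)
    (htot : ∀ μ ν (t : Fin 4 → Fin 4),
      ∑ σ : Equiv.Perm (Fin 4), W μ ν ((t ∘ σ) 0) (fun i => (t ∘ σ) i.succ) = 0) :
    ∀ μ ν ρ (s : Fin 3 → Fin 4),
      W μ ν ρ s = (6 : K)⁻¹ * ∑ σ : Equiv.Perm (Fin 3),
        ((3 / 4 : K) * W μ ν ρ ![s (σ 0), s (σ 1), s (σ 2)]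
          - (3 / 4 : K) * W μ ν (s (σ 0)) ![ρ, s (σ 1), s (σ 2)]) := by
  intro μ ν ρ s
  have hvec : ∀ σ : Perm (Fin 3), ![s (σ 0), s (σ 1), s (σ 2)] = s ∘ σ :=
    fun σ => by funext i; fin_cases i <;> rfl
  have hcons : ∀ σ : Perm (Fin 3), ![ρ, s (σ 1), s (σ 2)] = Fin.cons ρ (s ∘ σ ∘ Fin.succ) :=
    fun σ => by funext i; fin_cases i <;> rfl
  simp only [hvec, hcons]
  rw [eq_symmetrize_antisymmetrize_of_symmetrize_eq_zero (n := 2) (W μ ν) (hsym μ ν) (htot μ ν) ρ s]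
  norm_num

/-- A tensor `W^{[μν];ρ;{σ₁σ₂σ₃}}`, antisymmetric in `μ,ν` and totally symmetric in
`σ₁,σ₂,σ₃`, whose total symmetrization over the last four indices `ρ,σ₁,σ₂,σ₃` vanishes,
is recovered from `W̃^{[μν];[ρσ₁];{σ₂σ₃}} = (3/4)W^{[μν];ρ;{σ₁σ₂σ₃}} − (ρ ↔ σ₁)` by
`W^{[μν];ρ;{σ₁σ₂σ₃}} = S_{σ₁σ₂σ₃} W̃^{[μν];[ρσ₁];{σ₂σ₃}}`, with `S` the symmetrization
projector (average over permutations). -/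
theorem stmt14 {K : Type*} [Field K] [CharZero K]
    (W : Fin 4 → Fin 4 → Fin 4 → (Fin 3 → Fin 4) → K)
    (hanti : ∀ μ ν ρ s, W μ ν ρ s = - W ν μ ρ s)
    (hsym : ∀ μ ν ρ (s : Fin 3 → Fin 4) (σ : Equiv.Perm (Fin 3)),
      W μ ν ρ (s ∘ σ) = W μ ν ρ s)
    (htot : ∀ μ ν (t : Fin 4 → Fin 4),
      ∑ σ : Equiv.Perm (Fin 4), W μ ν ((t ∘ σ) 0) (fun i => (t ∘ σ) i.succ) = 0) :
    ∀ μ ν ρ (s : Fin 3 → Fin 4),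
      W μ ν ρ s = (6 : K)⁻¹ * ∑ σ : Equiv.Perm (Fin 3),
        ((3 / 4 : K) * W μ ν ρ ![s (σ 0), s (σ 1), s (σ 2)]
          - (3 / 4 : K) * W μ ν (s (σ 0)) ![ρ, s (σ 1), s (σ 2)]) :=
  stmt14_general W hsym htot
end

section
/- Let W^{[μν];[ρσ];λ} be a tensor (indices over a 4-element set, characteristic 0) antisymmetric in (μ,ν) and in (ρ,σ), satisfying both W^{[μν];[ρσ];λ} = −W^{[ρσ];[μν];λ} (antisymmetry under pair exchange) and W^{[μν];[ρσ];λ} = −W^{[μν];[ρλ];σ} (antisymmetry in σ,λ). Then W is totally antisymmetric in all five indices, hence identically zero in 4 dimensions. -/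
/-!
Write `f t = W (t 0) (t 1) (t 2) (t 3) (t 4)` for `t : Fin 5 → Fin 4`. The permutations `σ` with
`f (t ∘ σ) = sign σ • f t` for all `t` form a submonoid of `S₅`. The hypotheses put `(0 1)`,
`(2 3)` and `(3 4)` in it, and conjugating `(3 4)` by the pair exchange `(0 2)(1 3)`, under which
`f` also changes sign, gives `(1 4)`; from these come `(2 4)` and `(1 2)`, so all adjacent
transpositions and hence all of `S₅`. Five indices taking four values repeat one, and the
transposition of the two repeated positions then gives `f t = -f t`.
-/

open Equiv Equiv.Perm Function

section
variable {ι M : Type*} [AddCommGroup M] {n : ℕ}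

def TransformsBy (f : (Fin n → ι) → M) (σ : Perm (Fin n)) (c : ℤˣ) : Prop :=
  ∀ t, f (t ∘ σ) = c • f t

namespace TransformsBy

variable {f : (Fin n → ι) → M} {σ τ : Perm (Fin n)} {c d : ℤˣ}

theorem neg_one_iff : TransformsBy f σ (-1) ↔ ∀ t, f (t ∘ σ) = -f t := by
  simp only [TransformsBy, Units.neg_smul, one_smul]

theorem mul (hσ : TransformsBy f σ c) (hτ : TransformsBy f τ d) :
    TransformsBy f (σ * τ) (d * c) := fun t => by
  rw [mul_smul, ← hσ, ← hτ]
  rfl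

theorem inv (hσ : TransformsBy f σ c) : TransformsBy f σ⁻¹ c⁻¹ := fun t => by
  rw [eq_inv_smul_iff, ← hσ]
  simp [comp_assoc]

theorem swap_apply_apply {i j : Fin n} (hσ : TransformsBy f σ c)
    (hij : TransformsBy f (swap i j) d) : TransformsBy f (swap (σ i) (σ j)) d := by
  rw [Equiv.swap_apply_apply]
  simpa [mul_comm c, mul_assoc] using (hσ.mul hij).mul hσ.inv

end TransformsBy

def alternatingPerms (f : (Fin n → ι) → M) : Submonoid (Perm (Fin n)) where
  carrier := {σ | TransformsBy f σ (sign σ)}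
  mul_mem' {σ τ} hσ hτ := by
    show TransformsBy f (σ * τ) (sign (σ * τ))
    rw [Perm.sign_mul, mul_comm]
    exact hσ.mul hτ
  one_mem' t := by simp

theorem mem_alternatingPerms {f : (Fin n → ι) → M} {σ : Perm (Fin n)} :
    σ ∈ alternatingPerms f ↔ TransformsBy f σ (sign σ) :=
  Iff.rfl

theorem alternatingPerms_eq_top {f : (Fin (n + 1) → ι) → M}
    (h : ∀ i : Fin n, TransformsBy f (swap i.castSucc i.succ) (-1)) :
    alternatingPerms f = ⊤ := by
  rw [eq_top_iff, ← mclosure_swap_castSucc_succ, Submonoid.closure_le]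
  rintro _ ⟨i, rfl⟩
  refine mem_alternatingPerms.2 ?_
  rw [sign_swap (Fin.castSucc_lt_succ (i := i)).ne]
  exact h i

theorem transformsBy_swap {f : (Fin (n + 1) → ι) → M}
    (h : ∀ i : Fin n, TransformsBy f (swap i.castSucc i.succ) (-1)) {i j : Fin (n + 1)}
    (hij : i ≠ j) : TransformsBy f (swap i j) (-1) := by
  have hσ := mem_alternatingPerms.1 (alternatingPerms_eq_top h ▸ Submonoid.mem_top (swap i j))
  rwa [sign_swap hij] at hσ

theorem apply_eq_zero_of_not_injective [IsAddTorsionFree M] [DecidableEq ι]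
    {f : (Fin n → ι) → M} (hf : ∀ i j, i ≠ j → TransformsBy f (swap i j) (-1))
    {t : Fin n → ι} (ht : ¬ Injective t) : f t = 0 := by
  obtain ⟨i, j, hij, hne⟩ : ∃ i j, t i = t j ∧ i ≠ j := by
    simpa [Injective, and_comm] using ht
  have h := TransformsBy.neg_one_iff.1 (hf i j hne) t
  rw [show t ∘ swap i j = t from funext (apply_swap_eq_self hij), eq_neg_iff_add_eq_zero,
    ← two_nsmul] at h
  exact two_nsmul_eq_zero.mp h

end

/-- A tensor `W^{[μν];[ρσ];λ}` antisymmetric in `(μ,ν)`, in `(ρ,σ)`, antisymmetric under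
the pair exchange `(μν) ↔ (ρσ)`, and antisymmetric in `(σ,λ)`, is totally antisymmetric in
all five indices, hence identically zero in 4 dimensions. -/
theorem stmt15 {K : Type*} [Field K] [CharZero K]
    (W : Fin 4 → Fin 4 → Fin 4 → Fin 4 → Fin 4 → K)
    (h1 : ∀ μ ν ρ σ lam, W μ ν ρ σ lam = - W ν μ ρ σ lam)
    (h2 : ∀ μ ν ρ σ lam, W μ ν ρ σ lam = - W μ ν σ ρ lam)
    (h3 : ∀ μ ν ρ σ lam, W μ ν ρ σ lam = - W ρ σ μ ν lam)
    (h4 : ∀ μ ν ρ σ lam, W μ ν ρ σ lam = - W μ ν ρ lam σ) :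
    (∀ (t : Fin 5 → Fin 4) (i j : Fin 5), i ≠ j →
      W (t (Equiv.swap i j 0)) (t (Equiv.swap i j 1)) (t (Equiv.swap i j 2))
          (t (Equiv.swap i j 3)) (t (Equiv.swap i j 4))
        = - W (t 0) (t 1) (t 2) (t 3) (t 4)) ∧
    (∀ μ ν ρ σ lam, W μ ν ρ σ lam = 0) := by
  set f : (Fin 5 → Fin 4) → K := fun t => W (t 0) (t 1) (t 2) (t 3) (t 4)
  have s01 : TransformsBy f (swap 0 1) (-1) := TransformsBy.neg_one_iff.2 fun _ => h1 ..
  have s23 : TransformsBy f (swap 2 3) (-1) := TransformsBy.neg_one_iff.2 fun _ => h2 ..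
  have s34 : TransformsBy f (swap 3 4) (-1) := TransformsBy.neg_one_iff.2 fun _ => h4 ..
  have pair : TransformsBy f (swap 0 2 * swap 1 3) (-1) :=
    TransformsBy.neg_one_iff.2 fun _ => h3 ..
  have s14 : TransformsBy f (swap 1 4) (-1) := pair.swap_apply_apply (i := 3) (j := 4) s34
  have s24 : TransformsBy f (swap 2 4) (-1) := s23.swap_apply_apply (i := 3) (j := 4) s34
  have s12 : TransformsBy f (swap 1 2) (-1) := s14.swap_apply_apply (i := 4) (j := 2) s24
  have hswap : ∀ i j : Fin 5, i ≠ j → TransformsBy f (swap i j) (-1) := by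
    refine fun i j => transformsBy_swap fun k => ?_
    fin_cases k
    exacts [s01, s12, s23, s34]
  refine ⟨fun t i j hij => TransformsBy.neg_one_iff.1 (hswap i j hij) t, fun μ ν ρ σ l => ?_⟩
  exact apply_eq_zero_of_not_injective hswap (t := ![μ, ν, ρ, σ, l])
    fun hinj => absurd (Fintype.card_le_of_injective _ hinj) (by decide)
end
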